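/- In any neutrally stable configuration (μ*,b*), any incumbent of strictly lower cognitive level earns at most the efficient payoff against an incumbent with the highest cognitive level: if θ̲,θ̄∈C(μ*) with n_{θ̲}<n_{θ̄}=max{n_θ : θ∈C(μ*)}, then π_{θ̲}(θ̄|(μ*,b*)) ≤ π̂. -/

import Mathlib

open scoped Classical
set_option maxHeartbeats 1000000

noncomputable section

variable {A : Type} [Fintype A]

/-- Mixed strategies over a finite action set. -/
def Mixed (A : Type) [Fintype A] : Type :=
  { p : A → ℝ // (∀ a, 0 ≤ p a) ∧ ∑ a, p a = 1 }

/-- The pure (degenerate) mixed strategy on action `a`. -/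
def pureStrat (a : A) : Mixed A :=
  ⟨fun a' => if a' = a then 1 else 0, by
    refine ⟨fun a' => ?_, by simp⟩
    by_cases h : a' = a <;> simp [h]⟩

/-- Bilinear extension of a payoff function to mixed strategies. -/
def exPay (f : A → A → ℝ) (σ σ' : Mixed A) : ℝ :=
  ∑ a, ∑ a', σ.1 a * σ'.1 a' * f a a'

/-- Best replies to `σ'` under utility `u`. -/
def BR (u : A → A → ℝ) (σ' : Mixed A) : Set (Mixed A) :=
  { σ | ∀ τ : Mixed A, exPay u τ σ' ≤ exPay u σ σ' }

/-- Undominated strategies under utility `u`: best replies to some strategy. -/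
def Undom (u : A → A → ℝ) : Set (Mixed A) :=
  { σ | ∃ σ' : Mixed A, σ ∈ BR u σ' }

/-- Nash equilibria of the complete-information game induced by utilities `u`, `u'`. -/
def NE (u u' : A → A → ℝ) : Set (Mixed A × Mixed A) :=
  { p | p.1 ∈ BR u p.2 ∧ p.2 ∈ BR u' p.1 }

/-- Deception equilibria: profiles maximising the deceiver's utility `u` subject
to the deceived party (with utility `u'`) playing an undominated strategy. -/
def DE (u u' : A → A → ℝ) : Set (Mixed A × Mixed A) :=
  { p | p.2 ∈ Undom u' ∧
      ∀ σ σ' : Mixed A, σ' ∈ Undom u' → exPay u σ σ' ≤ exPay u p.1 p.2 }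

/-- Fitness-maximising deception equilibria (fitness payoff `pay`). -/
def FMDE (pay u u' : A → A → ℝ) : Set (Mixed A × Mixed A) :=
  { p | p ∈ DE u u' ∧
      ∀ σ σ' : Mixed A, σ' ∈ Undom u' → exPay pay σ σ' ≤ exPay pay p.1 p.2 }

/-- A type: a subjective utility together with a cognitive level. -/
abbrev GType (A : Type) : Type := (A → A → ℝ) × ℕ+

/-- The environment: fitness payoffs, cognitive costs and deception probabilities. -/
structure Model (A : Type) [Fintype A] : Type where
  π : A → A → ℝ
  k : ℕ+ → ℝ
  q : ℕ+ → ℕ+ → ℝ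
  k_nonneg : ∀ n, 0 ≤ k n
  k_mono : StrictMono k
  k_one : k 1 = 0
  k_tendsto : Filter.Tendsto k Filter.atTop Filter.atTop
  q_nonneg : ∀ n n', 0 ≤ q n n'
  q_le_one : ∀ n n', q n n' ≤ 1
  q_pos_iff : ∀ n n', 0 < q n n' ↔ n' < n

/-- A finite-support probability distribution over types. -/
structure TypeDist (A : Type) [Fintype A] : Type where
  w : GType A →₀ ℝ
  nonneg : ∀ θ, 0 ≤ w θ
  total : ∑ θ ∈ w.support, w θ = 1

/-- A configuration: a type distribution together with a behaviour policy. -/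
structure Config {A : Type} [Fintype A] (M : Model A) : Type where
  dist : TypeDist A
  bN : GType A → GType A → Mixed A
  bD : GType A → GType A → Mixed A
  bN_mem : ∀ θ ∈ dist.w.support, ∀ θ' ∈ dist.w.support,
    M.q θ.2 θ'.2 + M.q θ'.2 θ.2 < 1 → (bN θ θ', bN θ' θ) ∈ NE θ.1 θ'.1
  bD_mem : ∀ θ ∈ dist.w.support, ∀ θ' ∈ dist.w.support,
    θ'.2 < θ.2 → (bD θ θ', bD θ' θ) ∈ DE θ.1 θ'.1

/-- The incumbents: the support of the type distribution. -/
def Config.supp {M : Model A} (c : Config M) : Finset (GType A) := c.dist.w.support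

/-- Conditional fitness of `θ` when matched against `θ'`. -/
def condFit {M : Model A} (c : Config M) (θ θ' : GType A) : ℝ :=
  (M.q θ.2 θ'.2 + M.q θ'.2 θ.2) * exPay M.π (c.bD θ θ') (c.bD θ' θ)
    + (1 - M.q θ.2 θ'.2 - M.q θ'.2 θ.2) * exPay M.π (c.bN θ θ') (c.bN θ' θ)

/-- Expected fitness of type `θ` in configuration `c`. -/
def expFit {M : Model A} (c : Config M) (θ : GType A) : ℝ :=
  (∑ θ' ∈ c.supp, c.dist.w θ' * condFit c θ θ') - M.k θ.2

/-- Average fitness in the population. -/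
def avgFit {M : Model A} (c : Config M) : ℝ :=
  ∑ θ ∈ c.supp, c.dist.w θ * expFit c θ

/-- Payoff function of the type game induced by configuration `c`. -/
def typePay {M : Model A} (c : Config M) (θ θ' : GType A) : ℝ :=
  condFit c θ θ' - M.k θ.2

/-- Bilinear extension of a type-game payoff to finitely supported weights. -/
def playT {A : Type} [Fintype A] (F : GType A → GType A → ℝ) (x y : GType A →₀ ℝ) : ℝ :=
  ∑ θ ∈ x.support, ∑ θ' ∈ y.support, x θ * y θ' * F θ θ'

/-- `μ` is a neutrally stable strategy of the symmetric game with pure-strategy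
set `S` and payoff `F`. -/
def IsNSSOn (F : GType A → GType A → ℝ) (S : Finset (GType A)) (μ : TypeDist A) : Prop :=
  ∀ ν : TypeDist A, ν.w.support ⊆ S →
    ∃ εb : ℝ, εb ∈ Set.Ioo (0:ℝ) 1 ∧ ∀ ε ∈ Set.Ioo (0:ℝ) εb,
      playT F ν.w ((1 - ε) • μ.w + ε • ν.w) ≤ playT F μ.w ((1 - ε) • μ.w + ε • ν.w)

/-- `ct` is focal with respect to `c`. -/
def Focal {M : Model A} (c ct : Config M) : Prop :=
  c.supp ⊆ ct.supp ∧
    ∀ θ ∈ c.supp, ∀ θ' ∈ c.supp, ct.bN θ θ' = c.bN θ θ' ∧ ct.bD θ θ' = c.bD θ θ'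

/-- Neutrally stable configuration. -/
def IsNSC {M : Model A} (c : Config M) : Prop :=
  ∀ μ' : TypeDist A, ∃ εb : ℝ, εb ∈ Set.Ioo (0:ℝ) 1 ∧ ∀ ε ∈ Set.Ioo (0:ℝ) εb,
    ∀ ct : Config M, Focal c ct → ct.dist.w = (1 - ε) • c.dist.w + ε • μ'.w →
      IsNSSOn (typePay ct) ct.supp c.dist

/-- The efficient payoff `π̂`. -/
def effPay (M : Model A) [Nonempty A] : ℝ :=
  Finset.univ.sup' Finset.univ_nonempty
    (fun p : A × A => (M.π p.1 p.2 + M.π p.2 p.1) / 2)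

/-- The deviation gain of action `a`. -/
def devGain (M : Model A) [Nonempty A] (a : A) : ℝ :=
  (Finset.univ.sup' Finset.univ_nonempty fun a' => M.π a' a) - M.π a a

/-- The effective cost of deception `c = min_{n ≥ 2} k_n / q(n,1)`. -/
def effCost (M : Model A) : ℝ :=
  ⨅ n : { m : ℕ+ // 2 ≤ m }, M.k n.1 / M.q n.1 1

/-- Pure configuration with outcome `a`. -/
def IsPureCfg {M : Model A} (c : Config M) (a : A) : Prop :=
  ∀ θ ∈ c.supp, ∀ θ' ∈ c.supp,
    (M.q θ.2 θ'.2 + M.q θ'.2 θ.2 < 1 → c.bN θ θ' = pureStrat a) ∧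
    (0 < M.q θ.2 θ'.2 → c.bD θ θ' = pureStrat a)

/-- Genericity of a symmetric game. -/
def Generic (pay : A → A → ℝ) : Prop :=
  ∀ a a' b b' : A, ({a, a'} : Finset A) ≠ {b, b'} →
    pay a a' ≠ pay b b' ∧ pay a a' + pay a' a ≠ pay b b' + pay b' b

/-- The pure maxmin value. -/
def maxminVal (M : Model A) [Nonempty A] : ℝ :=
  Finset.univ.sup' Finset.univ_nonempty fun a =>
    Finset.univ.inf' Finset.univ_nonempty fun a' => M.π a a'

/-! ### Auxiliary lemmas for the proof of `stmt2` -/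

lemma exPay_const (t : ℝ) (σ σ' : Mixed A) : exPay (fun _ _ => t) σ σ' = t := by
  unfold exPay
  calc ∑ a, ∑ a', σ.1 a * σ'.1 a' * t
      = ∑ a, σ.1 a * ((∑ a', σ'.1 a') * t) := by
        refine Finset.sum_congr rfl fun a _ => ?_
        rw [Finset.sum_mul, Finset.mul_sum]
        exact Finset.sum_congr rfl fun a' _ => by ring
    _ = ∑ a, σ.1 a * t := by rw [σ'.2.2, one_mul]
    _ = (∑ a, σ.1 a) * t := by rw [Finset.sum_mul]
    _ = t := by rw [σ.2.2, one_mul]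

lemma BR_const (t : ℝ) (σ σ' : Mixed A) : σ ∈ BR (fun _ _ => t) σ' := by
  intro τ
  rw [exPay_const, exPay_const]

lemma exPay_self_le_effPay [Nonempty A] (M : Model A) (σ : Mixed A) :
    exPay M.π σ σ ≤ effPay M := by
  have h2 : exPay M.π σ σ = ∑ a, ∑ a', σ.1 a * σ.1 a' * M.π a' a := by
    rw [exPay, Finset.sum_comm]
    exact Finset.sum_congr rfl fun a _ => Finset.sum_congr rfl fun a' _ => by ring
  have h4 : 2 * exPay M.π σ σ
      = ∑ a, ∑ a', σ.1 a * σ.1 a' * (M.π a a' + M.π a' a) := by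
    rw [two_mul]
    nth_rewrite 2 [h2]
    rw [exPay, ← Finset.sum_add_distrib]
    refine Finset.sum_congr rfl fun a _ => ?_
    rw [← Finset.sum_add_distrib]
    exact Finset.sum_congr rfl fun a' _ => by ring
  have h5 : ∑ a, ∑ a', σ.1 a * σ.1 a' * (M.π a a' + M.π a' a)
      ≤ ∑ a, ∑ a', σ.1 a * σ.1 a' * (2 * effPay M) := by
    refine Finset.sum_le_sum fun a _ => Finset.sum_le_sum fun a' _ => ?_
    refine mul_le_mul_of_nonneg_left ?_ (mul_nonneg (σ.2.1 a) (σ.2.1 a'))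
    have hsup : (M.π a a' + M.π a' a) / 2 ≤ effPay M :=
      Finset.le_sup' (fun p : A × A => (M.π p.1 p.2 + M.π p.2 p.1) / 2)
        (Finset.mem_univ (a, a'))
    linarith
  have h6 : ∑ a, ∑ a', σ.1 a * σ.1 a' * (2 * effPay M) = 2 * effPay M :=
    exPay_const (2 * effPay M) σ σ
  linarith

lemma lin_le {a b eb : ℝ} (heb : 0 < eb)
    (h : ∀ ε ∈ Set.Ioo (0:ℝ) eb, (1 - ε) * a + ε * b ≤ 0) : a ≤ 0 := by
  by_contra hA
  push_neg at hA
  have habs : (0:ℝ) ≤ |b - a| := abs_nonneg _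
  have hpos : 0 < a / (2 * (|b - a| + 1)) := div_pos hA (by linarith)
  set ε : ℝ := min (eb / 2) (a / (2 * (|b - a| + 1))) with hεdef
  have hε0 : 0 < ε := lt_min (by linarith) hpos
  have hεlt : ε < eb := lt_of_le_of_lt (min_le_left _ _) (by linarith)
  have h2 := h ε ⟨hε0, hεlt⟩
  have hεle : ε ≤ a / (2 * (|b - a| + 1)) := min_le_right _ _
  have key : ε * |b - a| ≤ a / 2 := by
    calc ε * |b - a| ≤ (a / (2 * (|b - a| + 1))) * |b - a| :=
          mul_le_mul_of_nonneg_right hεle habs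
      _ ≤ a / 2 := by
          rw [div_mul_eq_mul_div, div_le_div_iff₀ (by linarith) (by norm_num)]
          nlinarith
  have hmul : ε * (-(|b - a|)) ≤ ε * (b - a) :=
    mul_le_mul_of_nonneg_left (neg_abs_le _) (le_of_lt hε0)
  have he : (1 - ε) * a + ε * b = a + ε * (b - a) := by ring
  nlinarith

lemma q_zero (M : Model A) {n n' : ℕ+} (h : ¬ n' < n) : M.q n n' = 0 := by
  have h1 := M.q_nonneg n n'
  have h2 : ¬ 0 < M.q n n' := fun hp => h ((M.q_pos_iff n n').1 hp)
  linarith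

lemma playT_eq (F : GType A → GType A → ℝ) (x y : GType A →₀ ℝ) (T : Finset (GType A))
    (hx : x.support ⊆ T) (hy : y.support ⊆ T) :
    playT F x y = ∑ θ ∈ T, ∑ θ' ∈ T, x θ * y θ' * F θ θ' := by
  rw [playT]
  calc ∑ θ ∈ x.support, ∑ θ' ∈ y.support, x θ * y θ' * F θ θ'
      = ∑ θ ∈ x.support, ∑ θ' ∈ T, x θ * y θ' * F θ θ' :=
        Finset.sum_congr rfl fun θ _ => Finset.sum_subset hy fun θ' _ h => by
          rw [Finsupp.notMem_support_iff.1 h, mul_zero, zero_mul]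
    _ = ∑ θ ∈ T, ∑ θ' ∈ T, x θ * y θ' * F θ θ' :=
        Finset.sum_subset hx fun θ _ h => Finset.sum_eq_zero fun θ' _ => by
          rw [Finsupp.notMem_support_iff.1 h, zero_mul, zero_mul]

/-- The point-mass type distribution. -/
def deltaDist (θ0 : GType A) : TypeDist A where
  w := Finsupp.single θ0 1
  nonneg := fun θ => by
    rw [Finsupp.single_apply]
    split <;> norm_num
  total := by
    rw [Finsupp.support_single_ne_zero _ one_ne_zero, Finset.sum_singleton,
      Finsupp.single_eq_same]

/-- Mixing two type distributions. -/
def mixDist (μ ν : TypeDist A) (ε : ℝ) (h0 : 0 ≤ ε) (h1 : ε ≤ 1) : TypeDist A where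
  w := (1 - ε) • μ.w + ε • ν.w
  nonneg := fun θ => by
    have hμ := μ.nonneg θ
    have hν := ν.nonneg θ
    simp only [Finsupp.add_apply, Finsupp.smul_apply, smul_eq_mul]
    nlinarith
  total := by
    have hval : ∀ θ, ((1 - ε) • μ.w + ε • ν.w) θ = (1 - ε) * μ.w θ + ε * ν.w θ := fun θ => by
      simp [Finsupp.add_apply, Finsupp.smul_apply, smul_eq_mul]
    have hsub : ((1 - ε) • μ.w + ε • ν.w).support ⊆ μ.w.support ∪ ν.w.support := by
      intro θ hθ
      rw [Finset.mem_union, Finsupp.mem_support_iff, Finsupp.mem_support_iff]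
      by_contra hc
      push_neg at hc
      apply Finsupp.mem_support_iff.1 hθ
      rw [hval θ, hc.1, hc.2]
      ring
    have hμ : ∑ θ ∈ μ.w.support ∪ ν.w.support, μ.w θ = 1 := by
      rw [← Finset.sum_subset Finset.subset_union_left
        (fun θ _ h => Finsupp.notMem_support_iff.1 h)]
      exact μ.total
    have hν : ∑ θ ∈ μ.w.support ∪ ν.w.support, ν.w θ = 1 := by
      rw [← Finset.sum_subset Finset.subset_union_right
        (fun θ _ h => Finsupp.notMem_support_iff.1 h)]
      exact ν.total
    calc ∑ θ ∈ ((1 - ε) • μ.w + ε • ν.w).support, ((1 - ε) • μ.w + ε • ν.w) θ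
        = ∑ θ ∈ μ.w.support ∪ ν.w.support, ((1 - ε) • μ.w + ε • ν.w) θ :=
          Finset.sum_subset hsub fun θ _ h => Finsupp.notMem_support_iff.1 h
      _ = ∑ θ ∈ μ.w.support ∪ ν.w.support, ((1 - ε) * μ.w θ + ε * ν.w θ) :=
          Finset.sum_congr rfl fun θ _ => hval θ
      _ = 1 := by
          rw [Finset.sum_add_distrib, ← Finset.mul_sum, ← Finset.mul_sum, hμ, hν]
          ring

/-- The mutant's "normal" behaviour policy. -/
def mutBN {M : Model A} (c : Config M) (Mt θb : GType A) (σy σx d : Mixed A) :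
    GType A → GType A → Mixed A := fun θ θ' =>
  if θ = Mt then (if θ' = Mt then d else if θ' = θb then σy else c.bN θb θ')
  else if θ' = Mt then (if θ = θb then σx else c.bN θ θb)
  else c.bN θ θ'

/-- The mutant's "deception" behaviour policy. -/
def mutBD {M : Model A} (c : Config M) (Mt θb : GType A) (d : Mixed A) :
    GType A → GType A → Mixed A := fun θ θ' =>
  if θ = Mt then (if θ' = Mt then d else c.bD θb θ')
  else if θ' = Mt then c.bD θ θb
  else c.bD θ θ'
/-- In any NSC, any incumbent of strictly lower cognitive level earns at most
the efficient payoff against an incumbent with the highest cognitive level. -/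
theorem stmt2 [Nonempty A] (hA : 3 ≤ Fintype.card A) (M : Model A)
    (c : Config M) (hNSC : IsNSC c)
    (θlow θbar : GType A) (hlow : θlow ∈ c.supp) (hbar : θbar ∈ c.supp)
    (hmax : ∀ θ ∈ c.supp, θ.2 ≤ θbar.2) (hlt : θlow.2 < θbar.2) :
    condFit c θlow θbar ≤ effPay M := by
  classical
  by_contra hcon
  push_neg at hcon
  -- hcon : effPay M < condFit c θlow θbar
  have hq0 : M.q θlow.2 θbar.2 = 0 := q_zero M (not_lt.2 hlt.le)
  have hqbb : M.q θbar.2 θbar.2 = 0 := q_zero M (lt_irrefl _)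
  -- Select a strategy profile (σy, σx) where σx is a best reply of θbar to σy and
  -- the σy-player earns strictly more than the efficient payoff.
  obtain ⟨σy, σx, hBR, hV⟩ :
      ∃ σy σx : Mixed A, (∀ τ : Mixed A, exPay θbar.1 τ σy ≤ exPay θbar.1 σx σy)
        ∧ effPay M < exPay M.π σy σx := by
    have hDE := c.bD_mem θbar hbar θlow hlow hlt
    rw [DE, Set.mem_setOf_eq] at hDE
    by_cases hcase : effPay M < exPay M.π (c.bD θlow θbar) (c.bD θbar θlow)
    · exact ⟨_, _, fun τ => hDE.2 τ (c.bD θlow θbar) hDE.1, hcase⟩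
    · have h1 : exPay M.π (c.bD θlow θbar) (c.bD θbar θlow) ≤ effPay M := not_lt.1 hcase
      have hq1nn := M.q_nonneg θbar.2 θlow.2
      have hq1le := M.q_le_one θbar.2 θlow.2
      have hcf : condFit c θlow θbar
          = M.q θbar.2 θlow.2 * exPay M.π (c.bD θlow θbar) (c.bD θbar θlow)
            + (1 - M.q θbar.2 θlow.2) * exPay M.π (c.bN θlow θbar) (c.bN θbar θlow) := by
        rw [condFit, hq0]; ring
      rw [hcf] at hcon
      have h2 : (1 - M.q θbar.2 θlow.2) * effPay M
          < (1 - M.q θbar.2 θlow.2) * exPay M.π (c.bN θlow θbar) (c.bN θbar θlow) := by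
        have hmul := mul_le_mul_of_nonneg_left h1 hq1nn
        nlinarith
      have h4 : 0 < 1 - M.q θbar.2 θlow.2 := by
        rcases lt_or_eq_of_le hq1le with h | h
        · linarith
        · exfalso
          rw [h, sub_self, zero_mul, zero_mul] at h2
          exact lt_irrefl 0 h2
      have hY : effPay M < exPay M.π (c.bN θlow θbar) (c.bN θbar θlow) :=
        (mul_lt_mul_iff_right₀ h4).1 h2
      have hNE := c.bN_mem θlow hlow θbar hbar (by rw [hq0]; linarith)
      rw [NE, Set.mem_setOf_eq] at hNE
      exact ⟨_, _, fun τ => hNE.2 τ, hY⟩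
  -- the mutant type
  obtain ⟨t, ht⟩ := Infinite.exists_notMem_finset
    ((c.supp).image fun p : GType A => p.1 (Classical.arbitrary A) (Classical.arbitrary A))
  set Mty : GType A := (fun _ _ => t, θbar.2) with hMty
  have hMnot : Mty ∉ c.supp := fun h => ht (Finset.mem_image.2 ⟨Mty, h, rfl⟩)
  have hM2 : Mty.2 = θbar.2 := by rw [hMty]
  have hM1 : Mty.1 = fun _ _ => t := by rw [hMty]
  have hwM : c.dist.w Mty = 0 := Finsupp.notMem_support_iff.1 hMnot
  have hbarM : θbar ≠ Mty := fun h => hMnot (h ▸ hbar)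
  set d : Mixed A := pureStrat (Classical.arbitrary A) with hd
  -- invoke neutral stability against the mutant distribution
  obtain ⟨εb, hεb, H⟩ := hNSC (deltaDist Mty)
  set ε : ℝ := εb / 2 with hε
  have hε0 : 0 < ε := by rw [hε]; linarith [hεb.1]
  have hε1 : ε < 1 := by rw [hε]; linarith [hεb.2]
  have hεmem : ε ∈ Set.Ioo (0:ℝ) εb := ⟨hε0, by rw [hε]; linarith [hεb.1]⟩
  set μmix : TypeDist A := mixDist c.dist (deltaDist Mty) ε (le_of_lt hε0) (le_of_lt hε1)
    with hμmix
  have hmixval : ∀ θ, μmix.w θ = (1 - ε) * c.dist.w θ + ε * (Finsupp.single Mty 1) θ := by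
    intro θ
    rw [hμmix]
    show ((1 - ε) • c.dist.w + ε • (deltaDist Mty).w) θ = _
    rw [Finsupp.add_apply, Finsupp.smul_apply, Finsupp.smul_apply, smul_eq_mul, smul_eq_mul]
    rfl
  have hsup1 : μmix.w.support ⊆ insert Mty c.supp := by
    intro θ hθ
    rw [Finset.mem_insert]
    by_contra hc
    push_neg at hc
    apply Finsupp.mem_support_iff.1 hθ
    rw [hmixval θ, Finsupp.single_apply, if_neg (fun h => hc.1 h.symm),
      Finsupp.notMem_support_iff.1 hc.2]
    ring
  have hsup2 : ∀ θ ∈ c.supp, θ ∈ μmix.w.support := by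
    intro θ hθ
    rw [Finsupp.mem_support_iff, hmixval θ, Finsupp.single_apply,
      if_neg (fun h : Mty = θ => hMnot (h ▸ hθ))]
    have h0 : c.dist.w θ ≠ 0 := Finsupp.mem_support_iff.1 hθ
    rw [mul_zero, add_zero]
    exact ne_of_gt (mul_pos (by linarith) (lt_of_le_of_ne (c.dist.nonneg θ) (Ne.symm h0)))
  have hsupM : Mty ∈ μmix.w.support := by
    rw [Finsupp.mem_support_iff, hmixval Mty, hwM, Finsupp.single_eq_same,
      mul_zero, zero_add, mul_one]
    exact ne_of_gt hε0
  -- the post-entry focal configuration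
  have hbN_mem : ∀ θ ∈ μmix.w.support, ∀ θ' ∈ μmix.w.support,
      M.q θ.2 θ'.2 + M.q θ'.2 θ.2 < 1 →
      (mutBN c Mty θbar σy σx d θ θ', mutBN c Mty θbar σy σx d θ' θ) ∈ NE θ.1 θ'.1 := by
    intro θ hθ θ' hθ' hq
    rcases Finset.mem_insert.1 (hsup1 hθ) with hθM | hθS <;>
      rcases Finset.mem_insert.1 (hsup1 hθ') with hθ'M | hθ'S
    · -- both mutants
      subst hθM; subst hθ'M
      have e1 : mutBN c Mty θbar σy σx d Mty Mty = d := by simp [mutBN]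
      rw [e1, NE, Set.mem_setOf_eq, hM1]
      exact ⟨BR_const t d d, BR_const t d d⟩
    · -- θ mutant, θ' incumbent
      subst hθM
      have hne' : θ' ≠ Mty := fun h => hMnot (h ▸ hθ'S)
      rw [hM2] at hq
      by_cases hb : θ' = θbar
      · rw [hb]
        have e1 : mutBN c Mty θbar σy σx d Mty θbar = σy := by simp [mutBN, hbarM]
        have e2 : mutBN c Mty θbar σy σx d θbar Mty = σx := by simp [mutBN, hbarM]
        rw [e1, e2, NE, Set.mem_setOf_eq, hM1]
        exact ⟨BR_const t σy σx, hBR⟩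
      · have e1 : mutBN c Mty θbar σy σx d Mty θ' = c.bN θbar θ' := by
          simp [mutBN, hne', hb]
        have e2 : mutBN c Mty θbar σy σx d θ' Mty = c.bN θ' θbar := by
          simp [mutBN, hne', hb]
        have hNE := c.bN_mem θbar hbar θ' hθ'S hq
        rw [NE, Set.mem_setOf_eq] at hNE
        rw [e1, e2, NE, Set.mem_setOf_eq, hM1]
        exact ⟨BR_const t _ _, hNE.2⟩
    · -- θ incumbent, θ' mutant
      subst hθ'M
      have hne : θ ≠ Mty := fun h => hMnot (h ▸ hθS)
      rw [hM2] at hq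
      by_cases hb : θ = θbar
      · rw [hb]
        have e1 : mutBN c Mty θbar σy σx d θbar Mty = σx := by simp [mutBN, hbarM]
        have e2 : mutBN c Mty θbar σy σx d Mty θbar = σy := by simp [mutBN, hbarM]
        rw [e1, e2, NE, Set.mem_setOf_eq, hM1]
        exact ⟨hBR, BR_const t σy σx⟩
      · have e1 : mutBN c Mty θbar σy σx d θ Mty = c.bN θ θbar := by
          simp [mutBN, hne, hb]
        have e2 : mutBN c Mty θbar σy σx d Mty θ = c.bN θbar θ := by
          simp [mutBN, hne, hb]
        have hNE := c.bN_mem θ hθS θbar hbar hq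
        rw [NE, Set.mem_setOf_eq] at hNE
        rw [e1, e2, NE, Set.mem_setOf_eq, hM1]
        exact ⟨hNE.1, BR_const t _ _⟩
    · -- both incumbents
      have hne : θ ≠ Mty := fun h => hMnot (h ▸ hθS)
      have hne' : θ' ≠ Mty := fun h => hMnot (h ▸ hθ'S)
      have e1 : mutBN c Mty θbar σy σx d θ θ' = c.bN θ θ' := by simp [mutBN, hne, hne']
      have e2 : mutBN c Mty θbar σy σx d θ' θ = c.bN θ' θ := by simp [mutBN, hne, hne']
      rw [e1, e2]
      exact c.bN_mem θ hθS θ' hθ'S hq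
  have hbD_mem : ∀ θ ∈ μmix.w.support, ∀ θ' ∈ μmix.w.support, θ'.2 < θ.2 →
      (mutBD c Mty θbar d θ θ', mutBD c Mty θbar d θ' θ) ∈ DE θ.1 θ'.1 := by
    intro θ hθ θ' hθ' hlt'
    rcases Finset.mem_insert.1 (hsup1 hθ) with hθM | hθS <;>
      rcases Finset.mem_insert.1 (hsup1 hθ') with hθ'M | hθ'S
    · subst hθM; subst hθ'M; exact absurd hlt' (lt_irrefl _)
    · subst hθM
      have hne' : θ' ≠ Mty := fun h => hMnot (h ▸ hθ'S)
      rw [hM2] at hlt'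
      have hDE := c.bD_mem θbar hbar θ' hθ'S hlt'
      rw [DE, Set.mem_setOf_eq] at hDE
      have e1 : mutBD c Mty θbar d Mty θ' = c.bD θbar θ' := by simp [mutBD, hne']
      have e2 : mutBD c Mty θbar d θ' Mty = c.bD θ' θbar := by simp [mutBD, hne']
      rw [e1, e2, DE, Set.mem_setOf_eq, hM1]
      exact ⟨hDE.1, fun σ σ' _ => by rw [exPay_const, exPay_const]⟩
    · subst hθ'M
      rw [hM2] at hlt'
      exact absurd hlt' (not_lt.2 (hmax θ hθS))
    · have hne : θ ≠ Mty := fun h => hMnot (h ▸ hθS)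
      have hne' : θ' ≠ Mty := fun h => hMnot (h ▸ hθ'S)
      have e1 : mutBD c Mty θbar d θ θ' = c.bD θ θ' := by simp [mutBD, hne, hne']
      have e2 : mutBD c Mty θbar d θ' θ = c.bD θ' θ := by simp [mutBD, hne, hne']
      rw [e1, e2]
      exact c.bD_mem θ hθS θ' hθ'S hlt'
  set ct : Config M :=
    { dist := μmix, bN := mutBN c Mty θbar σy σx d, bD := mutBD c Mty θbar d,
      bN_mem := hbN_mem, bD_mem := hbD_mem } with hct
  have hctbN : ct.bN = mutBN c Mty θbar σy σx d := by rw [hct]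
  have hctbD : ct.bD = mutBD c Mty θbar d := by rw [hct]
  have hctsupp : ct.supp = μmix.w.support := by rw [hct]; rfl
  have hFoc : Focal c ct := by
    refine ⟨?_, ?_⟩
    · rw [hctsupp]
      intro θ hθ
      exact hsup2 θ hθ
    · intro θ hθ θ' hθ'
      have hne : θ ≠ Mty := fun h => hMnot (h ▸ hθ)
      have hne' : θ' ≠ Mty := fun h => hMnot (h ▸ hθ')
      rw [hctbN, hctbD]
      constructor
      · simp [mutBN, hne, hne']
      · simp [mutBD, hne, hne']
  have hdisteq : ct.dist.w = (1 - ε) • c.dist.w + ε • (deltaDist Mty).w := by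
    rw [hct]; rfl
  have hNSS : IsNSSOn (typePay ct) ct.supp c.dist := H ε hεmem ct hFoc hdisteq
  -- set-up for the neutral-stability computations
  set T : Finset (GType A) := insert Mty c.supp with hT
  have hMnotT : Mty ∉ c.supp := hMnot
  have hTsub : c.dist.w.support ⊆ T := by
    rw [hT]; exact Finset.subset_insert _ _
  have hctsuppT : ∀ θ0 ∈ T, θ0 ∈ ct.supp := by
    intro θ0 h
    rw [hctsupp]
    rcases Finset.mem_insert.1 h with h | h
    · exact h ▸ hsupM
    · exact hsup2 θ0 h
  have hwT1 : ∑ θ ∈ T, c.dist.w θ = 1 := by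
    rw [hT, Finset.sum_insert hMnot, hwM, zero_add]
    exact c.dist.total
  -- Step A : every type in T earns (in the limit) at most the average
  have StepA : ∀ θ0 ∈ T,
      (∑ θ' ∈ T, c.dist.w θ' * typePay ct θ0 θ')
        ≤ ∑ θ ∈ T, c.dist.w θ * (∑ θ' ∈ T, c.dist.w θ' * typePay ct θ θ') := by
    intro θ0 hθ0T
    have hδT : (Finsupp.single θ0 (1:ℝ)).support ⊆ T := by
      intro x hx
      have hx' : x ∈ ({θ0} : Finset (GType A)) := Finsupp.support_single_subset hx
      rw [Finset.mem_singleton] at hx'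
      exact hx' ▸ hθ0T
    have hδsub : (deltaDist θ0).w.support ⊆ ct.supp := by
      intro x hx
      have hx' : x ∈ ({θ0} : Finset (GType A)) := Finsupp.support_single_subset hx
      rw [Finset.mem_singleton] at hx'
      exact hx' ▸ hctsuppT θ0 hθ0T
    obtain ⟨εb2, hεb2, H2⟩ := hNSS (deltaDist θ0) hδsub
    have key : ∀ ε2 ∈ Set.Ioo (0:ℝ) εb2,
        (1 - ε2) * ((∑ θ' ∈ T, c.dist.w θ' * typePay ct θ0 θ')
            - ∑ θ ∈ T, c.dist.w θ * (∑ θ' ∈ T, c.dist.w θ' * typePay ct θ θ'))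
          + ε2 * (typePay ct θ0 θ0 - ∑ θ ∈ T, c.dist.w θ * typePay ct θ θ0) ≤ 0 := by
      intro ε2 hε2
      have h := H2 ε2 hε2
      have hδw : (deltaDist θ0).w = Finsupp.single θ0 1 := rfl
      rw [hδw] at h
      have hmval : ∀ x, ((1 - ε2) • c.dist.w + ε2 • Finsupp.single θ0 (1:ℝ)) x
          = (1 - ε2) * c.dist.w x + ε2 * (Finsupp.single θ0 (1:ℝ)) x := fun x => by
        rw [Finsupp.add_apply, Finsupp.smul_apply, Finsupp.smul_apply, smul_eq_mul, smul_eq_mul]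
      have hmsub : ((1 - ε2) • c.dist.w + ε2 • Finsupp.single θ0 (1:ℝ)).support ⊆ T := by
        intro x hx
        by_contra hc
        apply Finsupp.mem_support_iff.1 hx
        have hx1 : c.dist.w x = 0 :=
          Finsupp.notMem_support_iff.1 (fun hh => hc (hTsub hh))
        have hx2 : Finsupp.single θ0 (1:ℝ) x = 0 := by
          rw [Finsupp.single_apply, if_neg]
          intro hh
          exact hc (hh ▸ hθ0T)
        rw [hmval, hx1, hx2]
        ring
      rw [playT_eq (typePay ct) (Finsupp.single θ0 1) _ T hδT hmsub,
        playT_eq (typePay ct) c.dist.w _ T hTsub hmsub] at h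
      have expand : ∀ x : GType A →₀ ℝ,
          (∑ θ ∈ T, ∑ θ' ∈ T,
            x θ * ((1 - ε2) • c.dist.w + ε2 • Finsupp.single θ0 (1:ℝ)) θ' * typePay ct θ θ')
          = (1 - ε2) * (∑ θ ∈ T, ∑ θ' ∈ T, x θ * c.dist.w θ' * typePay ct θ θ')
            + ε2 * (∑ θ ∈ T, ∑ θ' ∈ T,
                x θ * (Finsupp.single θ0 (1:ℝ)) θ' * typePay ct θ θ') := by
        intro x
        rw [Finset.mul_sum, Finset.mul_sum, ← Finset.sum_add_distrib]
        refine Finset.sum_congr rfl fun θ _ => ?_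
        rw [Finset.mul_sum, Finset.mul_sum, ← Finset.sum_add_distrib]
        refine Finset.sum_congr rfl fun θ' _ => ?_
        rw [hmval θ']
        ring
      rw [expand, expand] at h
      have collapse_left : ∀ y : GType A →₀ ℝ,
          (∑ θ ∈ T, ∑ θ' ∈ T, (Finsupp.single θ0 (1:ℝ)) θ * y θ' * typePay ct θ θ')
            = ∑ θ' ∈ T, y θ' * typePay ct θ0 θ' := by
        intro y
        rw [Finset.sum_eq_single_of_mem θ0 hθ0T]
        · refine Finset.sum_congr rfl fun θ' _ => ?_
          rw [Finsupp.single_eq_same, one_mul]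
        · intro b _ hb
          refine Finset.sum_eq_zero fun θ' _ => ?_
          rw [Finsupp.single_eq_of_ne hb, zero_mul, zero_mul]
      have collapse_right : ∀ x : GType A →₀ ℝ,
          (∑ θ ∈ T, ∑ θ' ∈ T, x θ * (Finsupp.single θ0 (1:ℝ)) θ' * typePay ct θ θ')
            = ∑ θ ∈ T, x θ * typePay ct θ θ0 := by
        intro x
        refine Finset.sum_congr rfl fun θ _ => ?_
        rw [Finset.sum_eq_single_of_mem θ0 hθ0T]
        · rw [Finsupp.single_eq_same, mul_one]
        · intro b _ hb
          rw [Finsupp.single_eq_of_ne hb, mul_zero, zero_mul]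
      rw [collapse_left, collapse_left, collapse_right] at h
      have e5 : ∑ θ' ∈ T, (Finsupp.single θ0 (1:ℝ)) θ' * typePay ct θ0 θ'
          = typePay ct θ0 θ0 := by
        rw [Finset.sum_eq_single_of_mem θ0 hθ0T]
        · rw [Finsupp.single_eq_same, one_mul]
        · intro b _ hb
          rw [Finsupp.single_eq_of_ne hb, zero_mul]
      rw [e5] at h
      have e3 : (∑ θ ∈ T, ∑ θ' ∈ T, c.dist.w θ * c.dist.w θ' * typePay ct θ θ')
          = ∑ θ ∈ T, c.dist.w θ * (∑ θ' ∈ T, c.dist.w θ' * typePay ct θ θ') := by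
        refine Finset.sum_congr rfl fun θ _ => ?_
        rw [Finset.mul_sum]
        exact Finset.sum_congr rfl fun θ' _ => by ring
      rw [e3] at h
      linarith
    have := lin_le hεb2.1 key
    linarith
  -- Step B : θbar earns exactly the average
  have hμbar_pos : 0 < c.dist.w θbar :=
    lt_of_le_of_ne (c.dist.nonneg θbar) (Ne.symm (Finsupp.mem_support_iff.1 hbar))
  have hbarT : θbar ∈ T := by rw [hT]; exact Finset.mem_insert_of_mem hbar
  have hMT : Mty ∈ T := by rw [hT]; exact Finset.mem_insert_self _ _
  have StepB : (∑ θ' ∈ T, c.dist.w θ' * typePay ct θbar θ')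
      = ∑ θ ∈ T, c.dist.w θ * (∑ θ' ∈ T, c.dist.w θ' * typePay ct θ θ') := by
    set avgT : ℝ := ∑ θ ∈ T, c.dist.w θ * (∑ θ' ∈ T, c.dist.w θ' * typePay ct θ θ')
      with havgT
    have hnn : ∀ θ ∈ T, 0 ≤ c.dist.w θ * (avgT - ∑ θ' ∈ T, c.dist.w θ' * typePay ct θ θ') :=
      fun θ hθ => mul_nonneg (c.dist.nonneg θ) (by linarith [StepA θ hθ])
    have hsum0 : ∑ θ ∈ T, c.dist.w θ * (avgT - ∑ θ' ∈ T, c.dist.w θ' * typePay ct θ θ')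
        = 0 := by
      have e : ∑ θ ∈ T, c.dist.w θ * (avgT - ∑ θ' ∈ T, c.dist.w θ' * typePay ct θ θ')
          = (∑ θ ∈ T, c.dist.w θ) * avgT
            - ∑ θ ∈ T, c.dist.w θ * (∑ θ' ∈ T, c.dist.w θ' * typePay ct θ θ') := by
        rw [Finset.sum_mul, ← Finset.sum_sub_distrib]
        exact Finset.sum_congr rfl fun θ _ => by ring
      rw [e, hwT1, one_mul, ← havgT, sub_self]
    have hz := (Finset.sum_eq_zero_iff_of_nonneg hnn).1 hsum0 θbar hbarT
    rcases mul_eq_zero.1 hz with h | h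
    · exact absurd h (ne_of_gt hμbar_pos)
    · have := sub_eq_zero.1 h
      linarith [this]
  -- payoff computations for the mutant
  have hFinc : ∀ θ θ', θ ≠ Mty → θ' ≠ Mty → typePay ct θ θ' = typePay c θ θ' := by
    intro θ θ' hne hne'
    rw [typePay, typePay, condFit, condFit, hctbN, hctbD]
    simp [mutBN, mutBD, hne, hne']
  have hcondMbar : condFit ct Mty θbar = exPay M.π σy σx := by
    rw [condFit, hctbN, hctbD]
    have b1 : mutBN c Mty θbar σy σx d Mty θbar = σy := by simp [mutBN, hbarM]
    have b2 : mutBN c Mty θbar σy σx d θbar Mty = σx := by simp [mutBN, hbarM]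
    rw [b1, b2, hM2, hqbb]
    ring
  have hcondbb : condFit c θbar θbar ≤ effPay M := by
    rw [condFit, hqbb]
    have h := exPay_self_le_effPay M (c.bN θbar θbar)
    nlinarith
  have hFMbar_gt : typePay ct θbar θbar < typePay ct Mty θbar := by
    have h1 : typePay ct Mty θbar = exPay M.π σy σx - M.k θbar.2 := by
      rw [typePay, hcondMbar, hM2]
    have h2 : typePay ct θbar θbar = condFit c θbar θbar - M.k θbar.2 := by
      rw [hFinc θbar θbar hbarM hbarM, typePay]
    rw [h1, h2]
    linarith
  have hFM : ∀ θ' ∈ c.supp, θ' ≠ θbar → typePay ct Mty θ' = typePay ct θbar θ' := by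
    intro θ' hθ'S hne
    have hne' : θ' ≠ Mty := fun h => hMnot (h ▸ hθ'S)
    rw [typePay, typePay, condFit, condFit, hctbN, hctbD]
    have b1 : mutBN c Mty θbar σy σx d Mty θ' = c.bN θbar θ' := by simp [mutBN, hne', hne]
    have b2 : mutBN c Mty θbar σy σx d θ' Mty = c.bN θ' θbar := by simp [mutBN, hne', hne]
    have b3 : mutBD c Mty θbar d Mty θ' = c.bD θbar θ' := by simp [mutBD, hne']
    have b4 : mutBD c Mty θbar d θ' Mty = c.bD θ' θbar := by simp [mutBD, hne']
    have b5 : mutBN c Mty θbar σy σx d θbar θ' = c.bN θbar θ' := by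
      simp [mutBN, hbarM, hne']
    have b6 : mutBN c Mty θbar σy σx d θ' θbar = c.bN θ' θbar := by
      simp [mutBN, hbarM, hne']
    have b7 : mutBD c Mty θbar d θbar θ' = c.bD θbar θ' := by simp [mutBD, hbarM, hne']
    have b8 : mutBD c Mty θbar d θ' θbar = c.bD θ' θbar := by simp [mutBD, hbarM, hne']
    rw [b1, b2, b3, b4, b5, b6, b7, b8, hM2]
  -- Step C : contradiction
  have hdiff : (∑ θ' ∈ T, c.dist.w θ' * typePay ct Mty θ')
      - (∑ θ' ∈ T, c.dist.w θ' * typePay ct θbar θ')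
      = c.dist.w θbar * (typePay ct Mty θbar - typePay ct θbar θbar) := by
    rw [← Finset.sum_sub_distrib]
    have e : ∀ θ' ∈ T, c.dist.w θ' * typePay ct Mty θ' - c.dist.w θ' * typePay ct θbar θ'
        = c.dist.w θ' * (typePay ct Mty θ' - typePay ct θbar θ') := fun θ' _ => by ring
    rw [Finset.sum_congr rfl e, Finset.sum_eq_single_of_mem θbar hbarT]
    · intro b hbT hbne
      rcases Finset.mem_insert.1 (by rw [hT] at hbT; exact hbT) with h | h
      · rw [h, hwM, zero_mul]
      · rw [hFM b h hbne, sub_self, mul_zero]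
  have hMle := StepA Mty hMT
  have hpos : 0 < c.dist.w θbar * (typePay ct Mty θbar - typePay ct θbar θbar) :=
    mul_pos hμbar_pos (by linarith [hFMbar_gt])
  linarith [hdiff, StepB, hMle, hpos]
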